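/- For a numerical semigroup S ≠ ℕ and a positive integer d, depth(S/d) ≤ depth(S), where depth(S) = ⌊F(S)/m(S)⌋ + 1. -/

import Mathlib

/-- A numerical semigroup: a submonoid of (ℕ,+) with finite complement. -/
def IsNumericalSemigroup (S : Set ℕ) : Prop :=
  0 ∈ S ∧ (∀ a ∈ S, ∀ b ∈ S, a + b ∈ S) ∧ Sᶜ.Finite

/-- The quotient S/d = {x ∈ ℕ : d*x ∈ S}. -/
def NumQuot (S : Set ℕ) (d : ℕ) : Set ℕ := {x | d * x ∈ S}

/-- The Frobenius number of S (for S ≠ ℕ): the maximum of the complement. -/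
noncomputable def frob (S : Set ℕ) : ℕ := sSup Sᶜ

/-- The multiplicity of S: the least positive element. -/
noncomputable def mult (S : Set ℕ) : ℕ := sInf (S \ {0})

/-- T is an arithmetic extension of S if T = {x : d₁x,...,dₙx ∈ S} for some
positive integers d₁,...,dₙ. -/
def IsArithmeticExtension (S T : Set ℕ) : Prop :=
  ∃ D : Finset ℕ, D.Nonempty ∧ (∀ d ∈ D, 0 < d) ∧ T = {x | ∀ d ∈ D, d * x ∈ S}

/-- An arithmetic variety: a nonempty family of numerical semigroups closed under
pairwise intersections and arithmetic extensions. -/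
def IsArithmeticVariety (𝒜 : Set (Set ℕ)) : Prop :=
  𝒜.Nonempty ∧ (∀ S ∈ 𝒜, IsNumericalSemigroup S) ∧
    (∀ S ∈ 𝒜, ∀ T ∈ 𝒜, S ∩ T ∈ 𝒜) ∧
    (∀ S ∈ 𝒜, ∀ T : Set ℕ, IsArithmeticExtension S T → T ∈ 𝒜)

open Classical in
/-- The depth of a numerical semigroup: ⌊F(S)/m(S)⌋ + 1, with depth(ℕ) = 0. -/
noncomputable def depth (S : Set ℕ) : ℕ :=
  if S = Set.univ then 0 else frob S / mult S + 1

/-! If `F' = F(S/d)` and `m' = m(S/d)`, then `d * m' ∈ S` is positive, so `m(S) ≤ d * m'`.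
Were `F' ≥ (⌊F/m⌋ + 1) * m'`, we would get `d * F' ≥ (⌊F/m⌋ + 1) * m > F`, forcing
`F' ∈ S/d`. Hence `F' < (⌊F/m⌋ + 1) * m'`, i.e. `⌊F'/m'⌋ ≤ ⌊F/m⌋`. -/

open Set

section

variable {S : Set ℕ}

theorem le_frob_of_notMem (hS : Sᶜ.Finite) {x : ℕ} (hx : x ∉ S) : x ≤ frob S :=
  le_csSup hS.bddAbove hx

theorem mem_of_frob_lt (hS : Sᶜ.Finite) {x : ℕ} (hx : frob S < x) : x ∈ S :=
  by_contra fun hxS => (le_frob_of_notMem hS hxS).not_gt hx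

theorem frob_notMem (hS : Sᶜ.Finite) (hS' : S ≠ univ) : frob S ∉ S :=
  Nat.sSup_mem (nonempty_compl.mpr hS') hS.bddAbove

theorem mult_mem_diff_zero (hS : Sᶜ.Finite) : mult S ∈ S \ {0} := by
  have hS_inf : S.Infinite := compl_compl S ▸ hS.infinite_compl
  exact Nat.sInf_mem (hS_inf.sdiff (finite_singleton 0)).nonempty

theorem mult_pos (hS : Sᶜ.Finite) : 0 < mult S :=
  Nat.pos_of_ne_zero (mult_mem_diff_zero hS).2

theorem mult_le {x : ℕ} (hx : x ∈ S) (hx0 : x ≠ 0) : mult S ≤ x :=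
  Nat.sInf_le ⟨hx, hx0⟩

theorem numQuot_univ (d : ℕ) : NumQuot univ d = univ := rfl

theorem numQuot_zero (h0 : 0 ∈ S) : NumQuot S 0 = univ :=
  eq_univ_of_forall fun x => by simpa [NumQuot] using h0

theorem compl_numQuot_finite (hS : Sᶜ.Finite) {d : ℕ} (hd : d ≠ 0) :
    (NumQuot S d)ᶜ.Finite :=
  hS.preimage (mul_right_injective₀ hd).injOn

theorem mult_le_mul_mult_numQuot (hS : Sᶜ.Finite) {d : ℕ} (hd : d ≠ 0) :
    mult S ≤ d * mult (NumQuot S d) := by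
  obtain ⟨hmem, hne⟩ := mult_mem_diff_zero (compl_numQuot_finite hS hd)
  exact mult_le hmem (mul_ne_zero hd hne)

theorem frob_numQuot_lt (hS : Sᶜ.Finite) {d : ℕ} (hd : d ≠ 0) (hQ : NumQuot S d ≠ univ) :
    frob (NumQuot S d) < mult (NumQuot S d) * (frob S / mult S + 1) := by
  by_contra! h
  refine frob_notMem (compl_numQuot_finite hS hd) hQ (mem_of_frob_lt hS ?_)
  calc frob S < mult S * (frob S / mult S + 1) := Nat.lt_mul_div_succ _ (mult_pos hS)
    _ ≤ d * mult (NumQuot S d) * (frob S / mult S + 1) :=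
        Nat.mul_le_mul_right _ (mult_le_mul_mult_numQuot hS hd)
    _ = d * (mult (NumQuot S d) * (frob S / mult S + 1)) := by ring
    _ ≤ d * frob (NumQuot S d) := Nat.mul_le_mul_left _ h

end

theorem depth_quot_le_general (S : Set ℕ) (hS : IsNumericalSemigroup S) (d : ℕ) :
    depth (NumQuot S d) ≤ depth S := by
  obtain ⟨h0, -, hfin⟩ := hS
  by_cases hQ : NumQuot S d = univ
  · simp [depth, hQ]
  have hd : d ≠ 0 := by rintro rfl; exact hQ (numQuot_zero h0)
  have hS' : S ≠ univ := by rintro rfl; exact hQ (numQuot_univ d)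
  simp only [depth, if_neg hQ, if_neg hS', add_le_add_iff_right]
  exact Nat.lt_succ_iff.mp (Nat.div_lt_of_lt_mul (frob_numQuot_lt hfin hd hQ))

theorem depth_quot_le (S : Set ℕ) (hS : IsNumericalSemigroup S)
    (hS' : S ≠ Set.univ) (d : ℕ) (hd : 0 < d) :
    depth (NumQuot S d) ≤ depth S :=
  depth_quot_le_general S hS d
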